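/- A multisegment 𝔪 has width at most k if and only if 𝔪 contains no nested chain Δ₁ ⊆ Δ₂ ⊆ ⋯ ⊆ Δ_{k+1} of k+1 segments (as a sub-multiset). -/

import Mathlib

/-!
Two distinct segments of a ladder are strictly ordered at both ends, so they are not nested:
a ladder meets a nested chain in at most one segment, and a nested chain of length `k + 1`
cannot be covered by `k` ladders. Conversely, the `⊆`-maximal segments of `𝔪`, one copy each,
form an antichain for `⊆`, hence a ladder, and every nested chain of what remains extends by one
of them to a longer nested chain of `𝔪`. Peeling off this ladder `k` times covers `𝔪`.
-/

/-- A segment is a pair of integers `(a,b)` with `a ≤ b`, viewed as the interval `[a,b] ⊆ ℤ`. -/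
abbrev Seg : Type := {p : ℤ × ℤ // p.1 ≤ p.2}

/-- left endpoint -/
def segB (Δ : Seg) : ℤ := Δ.val.1
/-- right endpoint -/
def segE (Δ : Seg) : ℤ := Δ.val.2

/-- the relation `⪯'` -/
def SegLE (Δ₁ Δ₂ : Seg) : Prop := Δ₁ = Δ₂ ∨ (segB Δ₁ < segB Δ₂ ∧ segE Δ₁ < segE Δ₂)

/-- the relation `≺` ("precedes") -/
def SegPrec (Δ₁ Δ₂ : Seg) : Prop :=
  segB Δ₁ ≤ segB Δ₂ - 1 ∧ segB Δ₂ - 1 ≤ segE Δ₁ ∧ segE Δ₁ < segE Δ₂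

/-- containment `Δ₁ ⊆ Δ₂` -/
def SegSub (Δ₁ Δ₂ : Seg) : Prop := segB Δ₂ ≤ segB Δ₁ ∧ segE Δ₁ ≤ segE Δ₂

/-- a ladder multisegment -/
def IsLadder (m : Multiset Seg) : Prop :=
  ∃ l : List Seg, m = ↑l ∧ l.Chain' (fun Δ₁ Δ₂ => segB Δ₁ < segB Δ₂ ∧ segE Δ₁ < segE Δ₂)

/-- the width of a multisegment: the minimal number of ladder multisegments summing to it -/
noncomputable def width (m : Multiset Seg) : ℕ :=
  sInf {k | ∃ L : List (Multiset Seg), L.length = k ∧ (∀ x ∈ L, IsLadder x) ∧ L.sum = m}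

abbrev SegLT (Δ₁ Δ₂ : Seg) : Prop := segB Δ₁ < segB Δ₂ ∧ segE Δ₁ < segE Δ₂

def HasNestedChain (m : Multiset Seg) (n : ℕ) : Prop :=
  ∃ l : List Seg, (↑l : Multiset Seg) ≤ m ∧ l.IsChain SegSub ∧ l.length = n

def IsLadderCover (m : Multiset Seg) (L : List (Multiset Seg)) : Prop :=
  (∀ x ∈ L, IsLadder x) ∧ L.sum = m

lemma seg_ext {x y : Seg} (hb : segB x = segB y) (he : segE x = segE y) : x = y :=
  Subtype.ext (Prod.ext hb he)

lemma segSub_refl (x : Seg) : SegSub x x := ⟨le_rfl, le_rfl⟩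

lemma segSub_trans {x y z : Seg} (hxy : SegSub x y) (hyz : SegSub y z) : SegSub x z :=
  ⟨hyz.1.trans hxy.1, hxy.2.trans hyz.2⟩

instance : Trans SegSub SegSub SegSub := ⟨segSub_trans⟩

instance : Trans SegLT SegLT SegLT := ⟨fun h₁ h₂ => ⟨h₁.1.trans h₂.1, h₁.2.trans h₂.2⟩⟩

lemma List.IsChain.rel_or_rel_of_mem {α : Type*} {r : α → α → Prop} [Trans r r r] {l : List α}
    (h : l.IsChain r) {x y : α} (hx : x ∈ l) (hy : y ∈ l) (hxy : x ≠ y) : r x y ∨ r y x :=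
  haveI : Std.Symm fun a b : α => r a b ∨ r b a := ⟨fun _ _ => Or.symm⟩
  ((List.isChain_iff_pairwise.mp h).imp (S := fun a b => r a b ∨ r b a) Or.inl).forall hx hy hxy

lemma Multiset.card_le_length_of_card_inter_le_one {α : Type*} [DecidableEq α] :
    ∀ {L : List (Multiset α)} {s : Multiset α}, s ≤ L.sum →
      (∀ t ∈ L, card (s ∩ t) ≤ 1) → card s ≤ L.length
  | [], s, hs, _ => by simp_all
  | t :: L, s, hs, hL => by
    have hrest : card (s - t) ≤ L.length := by
      refine card_le_length_of_card_inter_le_one (tsub_le_iff_left.mpr (by simpa using hs))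
        fun u hu => (card_le_card ?_).trans (hL u (List.mem_cons_of_mem t hu))
      exact le_inter (inter_le_left.trans (Multiset.sub_le_self s t)) inter_le_right
    calc card s = card (s - t) + card (s ∩ t) := by rw [← card_add, sub_add_inter]
      _ ≤ L.length + 1 := add_le_add hrest (hL t List.mem_cons_self)

lemma IsLadder.nodup {t : Multiset Seg} (ht : IsLadder t) : t.Nodup := by
  obtain ⟨l, rfl, hl : l.IsChain SegLT⟩ := ht
  exact Multiset.coe_nodup.mpr <| (List.isChain_iff_pairwise.mp hl).imp fun h hxy =>
    (hxy ▸ h).1.false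

lemma card_inter_le_one_of_isLadder {l : List Seg} {t : Multiset Seg} (hl : l.IsChain SegSub)
    (ht : IsLadder t) : Multiset.card (↑l ∩ t) ≤ 1 := by
  rw [← Multiset.toFinset_card_of_nodup (ht.nodup.inter_right _), Finset.card_le_one]
  obtain ⟨lad, rfl, hlad : lad.IsChain SegLT⟩ := ht
  intro x hx y hy
  by_contra hxy
  simp only [Multiset.mem_toFinset, Multiset.mem_inter, Multiset.mem_coe] at hx hy
  have hsub := hl.rel_or_rel_of_mem hx.1 hy.1 hxy
  have hlt := hlad.rel_or_rel_of_mem hx.2 hy.2 hxy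
  unfold SegSub at hsub
  omega

lemma IsLadderCover.length_le {m : Multiset Seg} {L : List (Multiset Seg)} {l : List Seg}
    (hL : IsLadderCover m L) (hlm : ↑l ≤ m) (hl : l.IsChain SegSub) : l.length ≤ L.length := by
  simpa using Multiset.card_le_length_of_card_inter_le_one (hL.2 ▸ hlm)
    fun t ht => card_inter_le_one_of_isLadder hl (hL.1 t ht)

lemma isLadder_of_isAntichain (s : Finset Seg) (hs : IsAntichain SegSub (s : Set Seg)) :
    IsLadder s.val := by
  set l := s.toList.mergeSort fun x y => decide (segB x ≤ segB y)
  have hperm : l.Perm s.toList := List.mergeSort_perm _ _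
  have hsorted : l.Pairwise fun x y => decide (segB x ≤ segB y) = true :=
    List.pairwise_mergeSort (by simp only [decide_eq_true_eq]; omega)
      (by simp only [Bool.or_eq_true, decide_eq_true_eq]; omega) _
  have hnd : l.Nodup := hperm.nodup_iff.mpr s.nodup_toList
  refine ⟨l, ((Multiset.coe_eq_coe.mpr hperm).trans s.coe_toList).symm, ?_⟩
  refine List.Pairwise.isChain ((hsorted.and hnd).imp_of_mem fun hx hy ⟨hle, hne⟩ => ?_)
  have hx' : _ ∈ (s : Set Seg) := Finset.mem_toList.mp (hperm.subset hx)
  have hy' : _ ∈ (s : Set Seg) := Finset.mem_toList.mp (hperm.subset hy)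
  have hxy : ¬ SegSub _ _ := hs hx' hy' hne
  have hyx : ¬ SegSub _ _ := hs hy' hx' (Ne.symm hne)
  simp only [decide_eq_true_eq] at hle
  unfold SegSub at hxy hyx
  omega

open scoped Classical in
noncomputable def maximalSegments (m : Multiset Seg) : Finset Seg :=
  m.toFinset.filter fun x => ∀ z ∈ m, SegSub x z → x = z

lemma mem_maximalSegments {m : Multiset Seg} {x : Seg} :
    x ∈ maximalSegments m ↔ x ∈ m ∧ ∀ z ∈ m, SegSub x z → x = z := by
  simp [maximalSegments]

lemma maximalSegments_val_le (m : Multiset Seg) : (maximalSegments m).val ≤ m := by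
  classical exact (Multiset.filter_le _ _).trans (Multiset.dedup_le m)

lemma isAntichain_maximalSegments (m : Multiset Seg) :
    IsAntichain SegSub (maximalSegments m : Set Seg) := fun _ hx _ hy hxy hsub =>
  hxy ((mem_maximalSegments.mp hx).2 _ (mem_maximalSegments.mp hy).1 hsub)

lemma exists_mem_maximalSegments_segSub {m : Multiset Seg} {y : Seg} (hy : y ∈ m) :
    ∃ z ∈ maximalSegments m, SegSub y z := by
  classical
  -- a segment of maximal length among those containing `y` is maximal
  obtain ⟨z, hz, hlongest⟩ := Finset.exists_max_image (m.toFinset.filter (SegSub y))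
    (fun z => segE z - segB z) ⟨y, by simp [hy, segSub_refl]⟩
  simp only [Finset.mem_filter, Multiset.mem_toFinset] at hz
  refine ⟨z, mem_maximalSegments.mpr ⟨hz.1, fun w hw hzw => ?_⟩, hz.2⟩
  have := hlongest w (by simp [hw, segSub_trans hz.2 hzw])
  unfold SegSub at hzw
  exact seg_ext (by omega) (by omega)

lemma HasNestedChain.of_sub_maximalSegments {m : Multiset Seg} {n : ℕ}
    (h : HasNestedChain (m - (maximalSegments m).val) (n + 1)) : HasNestedChain m (n + 2) := by
  obtain ⟨l, hlm, hl, hlen⟩ := h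
  obtain ⟨c, y, rfl⟩ : ∃ c y, l = c ++ [y] :=
    l.eq_nil_or_concat'.resolve_left (by rintro rfl; simp at hlen)
  obtain ⟨z, hz, hyz⟩ := exists_mem_maximalSegments_segSub
    (Multiset.mem_of_le (hlm.trans (Multiset.sub_le_self _ _)) (a := y) (by simp))
  refine ⟨c ++ [y, z], ?_, ?_, by simpa using hlen⟩
  · calc (↑(c ++ [y, z]) : Multiset Seg)
          = ↑(c ++ [y]) + ↑[z] := by rw [Multiset.coe_add, List.append_assoc]; rfl
      _ ≤ m - (maximalSegments m).val + (maximalSegments m).val :=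
        add_le_add hlm (Multiset.coe_singleton z ▸ Multiset.singleton_le.mpr hz)
      _ = m := tsub_add_cancel_of_le (maximalSegments_val_le m)
  · simp only [List.isChain_append_cons_cons, List.isChain_singleton, and_true]
    exact ⟨hl, hyz⟩

lemma exists_isLadderCover_of_not_hasNestedChain :
    ∀ {k : ℕ} {m : Multiset Seg}, ¬ HasNestedChain m (k + 1) →
      ∃ L, L.length = k ∧ IsLadderCover m L
  | 0, m, h => by
    have : m = 0 := Multiset.eq_zero_of_forall_notMem fun x hx =>
      h ⟨[x], by simpa using hx, List.isChain_singleton x, rfl⟩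
    exact ⟨[], rfl, by simp [IsLadderCover, this]⟩
  | k + 1, m, h => by
    obtain ⟨L, hlen, hlad, hsum⟩ := exists_isLadderCover_of_not_hasNestedChain (k := k)
      (m := m - (maximalSegments m).val) fun h' => h h'.of_sub_maximalSegments
    refine ⟨(maximalSegments m).val :: L, by simp [hlen], ?_, ?_⟩
    · simp only [List.forall_mem_cons]
      exact ⟨isLadder_of_isAntichain _ (isAntichain_maximalSegments m), hlad⟩
    · simp [hsum, add_tsub_cancel_of_le (maximalSegments_val_le m)]

lemma exists_isLadderCover_length_eq_width (m : Multiset Seg) :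
    ∃ L, L.length = width m ∧ IsLadderCover m L := by
  have hne : {k | ∃ L : List (Multiset Seg), L.length = k ∧ IsLadderCover m L}.Nonempty :=
    ⟨_, exists_isLadderCover_of_not_hasNestedChain (k := Multiset.card m)
      fun ⟨l, hlm, _, hlen⟩ => by simpa [hlen] using Multiset.card_le_card hlm⟩
  exact Nat.sInf_mem hne

/-- `ω(𝔪) ≤ k` iff `𝔪` contains no nested chain of `k+1` segments. -/
theorem width_le_iff_no_nested_chain (m : Multiset Seg) (k : ℕ) :
    width m ≤ k ↔
      ¬ ∃ l : List Seg, (↑l : Multiset Seg) ≤ m ∧ l.Chain' SegSub ∧ l.length = k + 1 := by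
  constructor
  · rintro hw ⟨l, hlm, hl, hlen⟩
    obtain ⟨L, hL, hcover⟩ := exists_isLadderCover_length_eq_width m
    have := hcover.length_le hlm hl
    omega
  · intro h
    obtain ⟨L, hL, hcover⟩ := exists_isLadderCover_of_not_hasNestedChain h
    exact Nat.sInf_le ⟨L, hL, hcover⟩
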